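/- arXiv:math/9404225 — 4 statements merged into one kernel-verified Lean document; each statement's English description precedes it below -/
import Mathlib

section
/- For 0<q<1 and n a nonnegative integer, the two series representations of the monic big q-Jacobi polynomial with a=b=0 agree: d^n q^{n(n-1)/2} · ₂φ₁(q^{-n}, c/x; 0; q, -qx/d) = (-c)^n q^{n(n-1)/2} · ₂φ₁(q^{-n}, -d/x; 0; q, qx/c), for all nonzero x (as an identity of polynomials in x after clearing denominators). -/
/-!
Evaluating `(q^{-n};q)_k` turns the left-hand side into
`∑_k [n,k]_q q^{C(n-k,2)} d^{n-k} x^k (c/x;q)_k`, and the terminating `q`-binomial theorem expands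
`x^k (c/x;q)_k = ∏_{j<k} (x - c q^j)`. The result is the `q`-trinomial sum
`∑_{j+i+l=n} [n; j,i,l]_q q^{C(j,2)+C(l,2)} (-c)^j x^i d^l`, which is symmetric under exchanging
`(-c, j)` with `(d, l)`; this exchange carries the left-hand side to the right-hand side.
-/

/-- finite q-shifted factorial `(a;q)_k = ∏_{j=0}^{k-1} (1 - a q^j)` -/
noncomputable def qPoch (q a : ℝ) (k : ℕ) : ℝ := ∏ j ∈ Finset.range k, (1 - a * q ^ j)

open Finset

section QPochhammer

variable {q : ℝ}

@[simp]
lemma qPoch_zero (a : ℝ) : qPoch q a 0 = 1 := prod_range_zero _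

lemma qPoch_succ (a : ℝ) (k : ℕ) : qPoch q a (k + 1) = qPoch q a k * (1 - a * q ^ k) :=
  prod_range_succ _ _

lemma qPoch_succ' (a : ℝ) (k : ℕ) : qPoch q a (k + 1) = (1 - a) * qPoch q (a * q) k := by
  rw [qPoch, qPoch, prod_range_succ', pow_zero, mul_one, mul_comm]
  congr 1
  exact prod_congr rfl fun j _ => by ring

lemma qPoch_self_succ (m : ℕ) : qPoch q q (m + 1) = qPoch q q m * (1 - q ^ (m + 1)) := by
  rw [qPoch_succ, ← pow_succ']

lemma qPoch_self_pos (hq0 : 0 ≤ q) (hq1 : q < 1) (m : ℕ) : 0 < qPoch q q m :=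
  prod_pos fun j _ => by
    rw [← pow_succ', sub_pos]
    exact pow_lt_one₀ hq0 hq1 j.succ_ne_zero

lemma qPoch_zpow_neg_mul (hq : q ≠ 0) {n k : ℕ} (hk : k ≤ n) :
    qPoch q (q ^ (-(n : ℤ))) k * q ^ (n * k) * qPoch q q (n - k)
      = (-1) ^ k * q ^ k.choose 2 * qPoch q q n := by
  induction k with
  | zero => simp
  | succ k ih =>
    have hpow : q ^ (-(n : ℤ)) * q ^ n = 1 := by
      rw [← zpow_natCast, ← zpow_add₀ hq, neg_add_cancel, zpow_zero]
    have hsplit : q ^ n = q ^ k * q ^ (n - k) := (pow_mul_pow_sub q (by omega)).symm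
    have hdrop : qPoch q q (n - k) = qPoch q q (n - (k + 1)) * (1 - q ^ (n - k)) := by
      rw [show n - k = n - (k + 1) + 1 by omega, qPoch_self_succ]
    rw [hdrop] at ih
    rw [qPoch_succ, Nat.choose_succ_succ', Nat.choose_one_right, pow_add, mul_add, mul_one,
      pow_add, pow_succ (-1 : ℝ)]
    linear_combination (-q ^ k) * ih (by omega)
      + qPoch q (q ^ (-(n : ℤ))) k * q ^ (n * k) * qPoch q q (n - (k + 1)) * hsplit
      - qPoch q (q ^ (-(n : ℤ))) k * q ^ (n * k) * qPoch q q (n - (k + 1)) * q ^ k * hpow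

end QPochhammer

noncomputable def qBinomial (q : ℝ) (n k : ℕ) : ℝ :=
  if k ≤ n then qPoch q q n / (qPoch q q k * qPoch q q (n - k)) else 0

section QBinomial

variable {q : ℝ}

lemma qBinomial_of_lt {n k : ℕ} (h : n < k) : qBinomial q n k = 0 := if_neg h.not_ge

variable (hq : ∀ m, qPoch q q m ≠ 0)
include hq

lemma qBinomial_zero_right (n : ℕ) : qBinomial q n 0 = 1 := by
  simp [qBinomial, div_self (hq n)]

lemma qBinomial_self (n : ℕ) : qBinomial q n n = 1 := by
  simp [qBinomial, div_self (hq n)]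

lemma one_sub_pow_succ_ne_zero (m : ℕ) : 1 - q ^ (m + 1) ≠ 0 := by
  have h := hq (m + 1)
  rw [qPoch_self_succ] at h
  exact right_ne_zero_of_mul h

lemma qBinomial_succ_succ (k j : ℕ) :
    qBinomial q (k + 1) (j + 1) = q ^ (j + 1) * qBinomial q k (j + 1) + qBinomial q k j := by
  rcases lt_trichotomy j k with hjk | rfl | hkj
  · obtain ⟨s, rfl⟩ := Nat.exists_eq_add_of_lt hjk
    simp only [qBinomial, if_pos (show j + 1 ≤ j + s + 1 + 1 by omega),
      if_pos (show j + 1 ≤ j + s + 1 by omega), if_pos (show j ≤ j + s + 1 by omega),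
      show j + s + 1 + 1 - (j + 1) = s + 1 by omega, show j + s + 1 - (j + 1) = s by omega,
      show j + s + 1 - j = s + 1 by omega]
    have := one_sub_pow_succ_ne_zero hq (j + s + 1); have := one_sub_pow_succ_ne_zero hq s
    have := one_sub_pow_succ_ne_zero hq j
    have := hq j; have := hq s; have := hq (j + s + 1)
    rw [qPoch_self_succ (j + s + 1), qPoch_self_succ s, qPoch_self_succ j]
    field_simp
    ring
  · rw [qBinomial_self hq, qBinomial_self hq, qBinomial_of_lt (Nat.lt_succ_self j)]
    ring
  · rw [qBinomial_of_lt (by omega), qBinomial_of_lt (by omega), qBinomial_of_lt hkj]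
    ring

lemma qBinomial_sub_mul_qBinomial_sub {n j k : ℕ} (hj : j ≤ n) (hk : k ≤ n) :
    qBinomial q n (n - j) * qBinomial q (n - j) (n - k) = qBinomial q n k * qBinomial q k j := by
  by_cases hjk : j ≤ k
  · simp only [qBinomial, if_pos (Nat.sub_le n j), if_pos (Nat.sub_le_sub_left hjk n), if_pos hk,
      if_pos hjk, Nat.sub_sub_self hj, show n - j - (n - k) = k - j by omega]
    have := hq n; have := hq j; have := hq k
    have := hq (n - j); have := hq (n - k); have := hq (k - j)
    field_simp
  · rw [qBinomial_of_lt (by omega : n - j < n - k), qBinomial_of_lt (by omega : k < j),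
      mul_zero, mul_zero]

lemma qPoch_eq_sum (a : ℝ) (k : ℕ) :
    qPoch q a k = ∑ j ∈ range (k + 1), qBinomial q k j * q ^ j.choose 2 * (-a) ^ j := by
  induction k generalizing a with
  | zero => simp [qBinomial_zero_right hq]
  | succ k ih =>
    obtain ⟨u, hu⟩ : ∃ u : ℕ → ℝ,
        u = fun j => qBinomial q k j * q ^ j.choose 2 * (-(a * q)) ^ j := ⟨_, rfl⟩
    have hpascal : ∀ j, qBinomial q (k + 1) (j + 1) * q ^ (j + 1).choose 2 * (-a) ^ (j + 1)
        = u (j + 1) + (-a) * u j := by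
      intro j
      simp only [hu, qBinomial_succ_succ hq, Nat.choose_succ_succ', Nat.choose_one_right]
      ring
    have hshift : ∑ j ∈ range (k + 1), u (j + 1) = ∑ j ∈ range (k + 1), u j - 1 := by
      have h := sum_range_succ' u (k + 1)
      have hu0 : u 0 = 1 := by simp [hu, qBinomial_zero_right hq]
      have hutop : u (k + 1) = 0 := by simp [hu, qBinomial_of_lt (Nat.lt_succ_self k)]
      rw [sum_range_succ, hu0, hutop] at h
      linarith
    have hsum : qPoch q (a * q) k = ∑ j ∈ range (k + 1), u j := by rw [ih, hu]
    rw [qPoch_succ', hsum, sum_range_succ' _ (k + 1), sum_congr rfl fun j _ => hpascal j,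
      sum_add_distrib, ← mul_sum, hshift, qBinomial_zero_right hq, Nat.choose_zero_succ]
    ring

lemma pow_mul_qPoch_div_eq_sum {k N : ℕ} (hkN : k ≤ N) (c : ℝ) {x : ℝ} (hx : x ≠ 0) :
    x ^ k * qPoch q (c / x) k
      = ∑ j ∈ range (N + 1), qBinomial q k j * q ^ j.choose 2 * (-c) ^ j * x ^ (k - j) := by
  rw [qPoch_eq_sum hq, mul_sum]
  refine (sum_congr rfl fun j hj => ?_).trans
    (sum_subset (range_subset_range.2 (by omega)) fun j _ hj => ?_)
  · rw [← pow_sub_mul_pow x (mem_range_succ_iff.1 hj), ← neg_div, div_pow]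
    field_simp
  · rw [qBinomial_of_lt (by simpa using hj)]
    ring

end QBinomial

lemma Nat.add_choose_two_add_choose_two (k m : ℕ) :
    (k + m).choose 2 + k.choose 2 + k = m.choose 2 + (k + m) * k := by
  apply Nat.cast_injective (R := ℚ)
  push_cast [Nat.cast_choose_two]
  ring

/-- `∑_{j+i+l=n} [n; j,i,l]_q q^{C(j,2)+C(l,2)} u^j x^i v^l`, indexed by `k = j + i ≤ n` and
`j ≤ n`; the terms with `j > k` vanish because `[k, j]_q = 0`. -/
noncomputable def qTrinomialSum (q : ℝ) (n : ℕ) (u x v : ℝ) : ℝ :=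
  ∑ k ∈ range (n + 1), ∑ j ∈ range (n + 1),
    qBinomial q n k * qBinomial q k j * q ^ (j.choose 2 + (n - k).choose 2)
      * u ^ j * x ^ (k - j) * v ^ (n - k)

lemma qTrinomialSum_comm {q : ℝ} (hq : ∀ m, qPoch q q m ≠ 0) (n : ℕ) (u x v : ℝ) :
    qTrinomialSum q n u x v = qTrinomialSum q n v x u := by
  have reflect (f : ℕ → ℝ) : ∑ j ∈ range (n + 1), f (n - j) = ∑ j ∈ range (n + 1), f j := by
    simpa using sum_range_reflect f (n + 1)
  set g : ℕ → ℕ → ℝ := fun k j => qBinomial q n k * qBinomial q k j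
    * q ^ (j.choose 2 + (n - k).choose 2) * v ^ j * x ^ (k - j) * u ^ (n - k) with hg
  -- reindex by `(k, j) ↦ (n - j, n - k)`
  calc qTrinomialSum q n u x v
      = ∑ k ∈ range (n + 1), ∑ j ∈ range (n + 1), g (n - j) (n - k) := by
        refine sum_congr rfl fun k hk => sum_congr rfl fun j hj => ?_
        have hk := mem_range_succ_iff.1 hk
        have hj := mem_range_succ_iff.1 hj
        simp only [hg]
        rw [← qBinomial_sub_mul_qBinomial_sub hq hj hk, Nat.sub_sub_self hj,
          tsub_tsub_tsub_cancel_left hk, add_comm (j.choose 2)]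
        ring
    _ = ∑ j ∈ range (n + 1), ∑ k ∈ range (n + 1), g (n - j) (n - k) := sum_comm
    _ = qTrinomialSum q n v x u := by
        rw [sum_congr rfl fun j _ => reflect (g (n - j)),
          reflect fun j => ∑ k ∈ range (n + 1), g j k]
        rfl

section Series

variable {q : ℝ} (hq : ∀ m, qPoch q q m ≠ 0) (hq0 : q ≠ 0)
include hq hq0

lemma series_term_eq {n k : ℕ} (hk : k ≤ n) (a x : ℝ) {d : ℝ} (hd : d ≠ 0) :
    d ^ n * q ^ n.choose 2 *
        (qPoch q (q ^ (-(n : ℤ))) k * qPoch q a k / qPoch q q k * (-(q * x / d)) ^ k)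
      = qBinomial q n k * q ^ (n - k).choose 2 * d ^ (n - k) * x ^ k * qPoch q a k := by
  obtain ⟨m, rfl⟩ := Nat.exists_eq_add_of_le hk
  have hexp : q ^ (k + m).choose 2 * q ^ k.choose 2 * q ^ k
      = q ^ m.choose 2 * q ^ ((k + m) * k) := by
    rw [← pow_add, ← pow_add, ← pow_add, Nat.add_choose_two_add_choose_two]
  have hsign : ((-1) ^ k * (-1) ^ k : ℝ) = 1 := by rw [← mul_pow]; norm_num
  have h := qPoch_zpow_neg_mul hq0 hk
  rw [Nat.add_sub_cancel_left] at h ⊢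
  have hA : qPoch q (q ^ (-((k + m : ℕ) : ℤ))) k
      = (-1) ^ k * q ^ k.choose 2 * qPoch q q (k + m) / (q ^ ((k + m) * k) * qPoch q q m) :=
    eq_div_of_mul_eq (mul_ne_zero (pow_ne_zero _ hq0) (hq m)) (by rw [← mul_assoc]; exact h)
  rw [hA, qBinomial, if_pos hk, Nat.add_sub_cancel_left, neg_pow (q * x / d), div_pow, mul_pow]
  have := hq k; have := hq m
  field_simp
  linear_combination d ^ k * d ^ m * qPoch q q (k + m) * qPoch q a k * x ^ k
    * (hexp + q ^ (k + m).choose 2 * q ^ k.choose 2 * q ^ k * hsign)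

lemma series_eq_qTrinomialSum (n : ℕ) (c : ℝ) {x d : ℝ} (hx : x ≠ 0) (hd : d ≠ 0) :
    d ^ n * q ^ n.choose 2 * ∑ k ∈ range (n + 1),
        qPoch q (q ^ (-(n : ℤ))) k * qPoch q (c / x) k / qPoch q q k * (-(q * x / d)) ^ k
      = qTrinomialSum q n (-c) x d := by
  rw [mul_sum, qTrinomialSum]
  refine sum_congr rfl fun k hk => ?_
  have hk := mem_range_succ_iff.1 hk
  rw [series_term_eq hq hq0 hk _ _ hd, mul_assoc, pow_mul_qPoch_div_eq_sum hq hk c hx, mul_sum]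
  exact sum_congr rfl fun j _ => by ring

end Series

/-- Agreement of the two series representations of the monic big q-Jacobi
polynomial with `a = b = 0`, for all nonzero `x`. -/
theorem bigqJacobi_two_series_agree (q c d x : ℝ) (hq0 : 0 < q) (hq1 : q < 1)
    (hc : c ≠ 0) (hd : d ≠ 0) (hx : x ≠ 0) (n : ℕ) :
    d ^ n * q ^ (n * (n - 1) / 2) *
      ∑ k ∈ Finset.range (n + 1),
        qPoch q (q ^ (-(n : ℤ))) k * qPoch q (c / x) k / qPoch q q k * (-(q * x / d)) ^ k
    = (-c) ^ n * q ^ (n * (n - 1) / 2) *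
      ∑ k ∈ Finset.range (n + 1),
        qPoch q (q ^ (-(n : ℤ))) k * qPoch q (-(d / x)) k / qPoch q q k * (q * x / c) ^ k := by
  have hq : ∀ m, qPoch q q m ≠ 0 := fun m => (qPoch_self_pos hq0.le hq1 m).ne'
  have hR := series_eq_qTrinomialSum hq hq0.ne' n (-d) hx (neg_ne_zero.2 hc)
  rw [neg_neg, neg_div, div_neg, neg_neg] at hR
  rw [← Nat.choose_two_right, series_eq_qTrinomialSum hq hq0.ne' n c hx hd, hR,
    qTrinomialSum_comm hq]
end

section
/- Limit of little q-Jacobi polynomials to Jacobi polynomials: for real α,β > -1, a nonnegative integer n and real x, lim_{q↑1} p_n(x; q^α, q^β; q) = R_n^{(α,β)}(1-2x), where R_n^{(α,β)} is the Jacobi polynomial normalized by R_n^{(α,β)}(1)=1. -/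
open Filter

/-- little q-Jacobi polynomial `p_n(x; q^α, q^β; q) = ₂φ₁(q^{-n}, q^{n+1+α+β}; q^{1+α}; q, qx)`. -/
noncomputable def littleqJacobiP (q α β : ℝ) (n : ℕ) (x : ℝ) : ℝ :=
  ∑ k ∈ Finset.range (n + 1),
    qPoch q (q ^ (-(n : ℤ))) k * qPoch q (q ^ (α + β) * q ^ (n + 1)) k
      / (qPoch q (q ^ α * q) k * qPoch q q k) * (q * x) ^ k

/-- Jacobi polynomial `R_n^{(α,β)}(y) = ₂F₁(-n, n+α+β+1; α+1; (1-y)/2)`,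
normalized so that `R_n^{(α,β)}(1) = 1`. -/
noncomputable def jacobiR (n : ℕ) (α β : ℝ) (y : ℝ) : ℝ :=
  ∑ k ∈ Finset.range (n + 1),
    (∏ j ∈ Finset.range k, (-(n : ℝ) + j)) * (∏ j ∈ Finset.range k, ((n : ℝ) + α + β + 1 + j))
      / ((∏ j ∈ Finset.range k, (α + 1 + j)) * (Nat.factorial k)) * ((1 - y) / 2) ^ k

open Topology

/-!
Each `q`-shifted factorial behaves like a rising factorial near `q = 1`:
`(q^c; q)_k / (1 - q)^k → (c)_k`, because `(1 - q^(c+j)) / (1 - q)` is a difference quotient of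
`q ↦ q^(c+j)` at `1`. Writing `p_n(x; q^α, q^β; q)` with all parameters as real powers of `q`,
the factors `(1 - q)^k` cancel between numerator and denominator of the `k`-th coefficient, which
therefore tends to the `k`-th coefficient of `₂F₁(-n, n+α+β+1; α+1; x) = R_n^{(α,β)}(1-2x)`.
-/

theorem tendsto_one_sub_rpow_div_one_sub (c : ℝ) :
    Tendsto (fun q : ℝ => (1 - q ^ c) / (1 - q)) (𝓝[≠] 1) (𝓝 c) := by
  have hderiv : HasDerivAt (fun q : ℝ => q ^ c) c 1 := by
    simpa using Real.hasDerivAt_rpow_const (x := 1) (p := c) (Or.inl one_ne_zero)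
  refine (hasDerivAt_iff_tendsto_slope.mp hderiv).congr fun q => ?_
  rw [slope_def_field, Real.one_rpow, ← neg_div_neg_eq, neg_sub, neg_sub]

theorem qPoch_rpow_eq_prod {q : ℝ} (hq : 0 < q) (c : ℝ) (k : ℕ) :
    qPoch q (q ^ c) k = ∏ j ∈ Finset.range k, (1 - q ^ (c + j)) :=
  Finset.prod_congr rfl fun j _ => by rw [Real.rpow_add hq, Real.rpow_natCast]

theorem tendsto_qPoch_rpow_div_one_sub_pow (c : ℝ) (k : ℕ) :
    Tendsto (fun q : ℝ => qPoch q (q ^ c) k / (1 - q) ^ k) (𝓝[≠] 1)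
      (𝓝 (∏ j ∈ Finset.range k, (c + j))) := by
  refine (tendsto_finsetProd (Finset.range k) fun j _ =>
    tendsto_one_sub_rpow_div_one_sub (c + j)).congr' ?_
  filter_upwards [eventually_nhdsWithin_of_eventually_nhds (lt_mem_nhds one_pos)] with q hq
  rw [qPoch_rpow_eq_prod hq, Finset.prod_div_distrib, Finset.prod_const, Finset.card_range]

theorem tendsto_qPoch_ratio (a b c d : ℝ) (k : ℕ)
    (hc : ∏ j ∈ Finset.range k, (c + j) ≠ 0) (hd : ∏ j ∈ Finset.range k, (d + j) ≠ 0) :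
    Tendsto (fun q : ℝ => qPoch q (q ^ a) k * qPoch q (q ^ b) k /
        (qPoch q (q ^ c) k * qPoch q (q ^ d) k)) (𝓝[≠] 1)
      (𝓝 ((∏ j ∈ Finset.range k, (a + j)) * (∏ j ∈ Finset.range k, (b + j)) /
        ((∏ j ∈ Finset.range k, (c + j)) * ∏ j ∈ Finset.range k, (d + j)))) := by
  have hlim := ((tendsto_qPoch_rpow_div_one_sub_pow a k).mul
    (tendsto_qPoch_rpow_div_one_sub_pow b k)).div
    ((tendsto_qPoch_rpow_div_one_sub_pow c k).mul (tendsto_qPoch_rpow_div_one_sub_pow d k))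
    (mul_ne_zero hc hd)
  refine hlim.congr' ?_
  filter_upwards [self_mem_nhdsWithin] with q hq
  have hp : (1 - q) ^ k ≠ 0 := pow_ne_zero _ (sub_ne_zero.mpr (Ne.symm hq))
  rw [Pi.div_apply, div_mul_div_comm, div_mul_div_comm,
    div_div_div_cancel_right₀ (mul_ne_zero hp hp)]

theorem littleqJacobiP_eq_sum_rpow {q : ℝ} (hq : 0 < q) (α β : ℝ) (n : ℕ) (x : ℝ) :
    littleqJacobiP q α β n x = ∑ k ∈ Finset.range (n + 1),
      qPoch q (q ^ (-(n : ℝ))) k * qPoch q (q ^ ((n : ℝ) + α + β + 1)) k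
        / (qPoch q (q ^ (α + 1)) k * qPoch q (q ^ (1 : ℝ)) k) * (q * x) ^ k := by
  have hn : q ^ (-(n : ℤ)) = q ^ (-(n : ℝ)) := by
    rw [← Real.rpow_intCast]; push_cast; rfl
  have hnαβ : q ^ (α + β) * q ^ (n + 1) = q ^ ((n : ℝ) + α + β + 1) := by
    rw [← Real.rpow_natCast, ← Real.rpow_add hq]; push_cast; ring_nf
  rw [littleqJacobiP, hn, hnαβ, Real.rpow_add hq α 1, Real.rpow_one]

theorem jacobiR_one_sub_two_mul (n : ℕ) (α β x : ℝ) :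
    jacobiR n α β (1 - 2 * x) = ∑ k ∈ Finset.range (n + 1),
      (∏ j ∈ Finset.range k, (-(n : ℝ) + j)) * (∏ j ∈ Finset.range k, ((n : ℝ) + α + β + 1 + j))
        / ((∏ j ∈ Finset.range k, (α + 1 + j)) * ∏ j ∈ Finset.range k, ((1 : ℝ) + j)) * x ^ k := by
  refine Finset.sum_congr rfl fun k _ => ?_
  rw [← Finset.prod_range_add_one_eq_factorial]
  push_cast
  ring_nf

theorem littleqJacobi_tendsto_jacobi_general (α β : ℝ) (hα : -1 < α)
    (n : ℕ) (x : ℝ) :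
    Tendsto (fun q : ℝ => littleqJacobiP q α β n x)
      (nhdsWithin 1 (Set.Ioo 0 1)) (nhds (jacobiR n α β (1 - 2 * x))) := by
  have hfilter : 𝓝[Set.Ioo 0 1] (1 : ℝ) ≤ 𝓝[≠] 1 :=
    nhdsWithin_mono _ fun q hq => hq.2.ne
  rw [jacobiR_one_sub_two_mul, tendsto_congr' (eventually_nhdsWithin_of_forall fun q hq =>
    littleqJacobiP_eq_sum_rpow hq.1 α β n x)]
  refine tendsto_finsetSum _ fun k _ => Tendsto.mul ?_ ?_
  · refine (tendsto_qPoch_ratio _ _ _ _ k ?_ ?_).mono_left hfilter <;>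
      exact Finset.prod_ne_zero_iff.mpr fun j _ => by linarith [j.cast_nonneg' (α := ℝ)]
  · have hcont : Continuous fun q : ℝ => (q * x) ^ k := by fun_prop
    simpa using (hcont.tendsto 1).mono_left (nhdsWithin_le_nhds (s := Set.Ioo 0 1))

/-- As `q ↑ 1`, the little q-Jacobi polynomial `p_n(x;q^α,q^β;q)` tends to the
normalized Jacobi polynomial `R_n^{(α,β)}(1-2x)`. -/
theorem littleqJacobi_tendsto_jacobi (α β : ℝ) (hα : -1 < α) (hβ : -1 < β)
    (n : ℕ) (x : ℝ) :
    Tendsto (fun q : ℝ => littleqJacobiP q α β n x)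
      (nhdsWithin 1 (Set.Ioo 0 1)) (nhds (jacobiR n α β (1 - 2 * x))) :=
  littleqJacobi_tendsto_jacobi_general α β hα n x
end

section
/- Limit of dual q-Krawtchouk polynomials to Jacobi polynomials: for c,d>0 and integers 0 ≤ m ≤ l, lim_{q↑1} R_{l-m}(q^{-l} - (d/c)q^{-l}; c/d, 2l; q) = ((m+1)_{l-m}/(l+m+1)_{l-m}) (1+d/c)^{l-m} R_{l-m}^{(m,m)}((c-d)/(c+d)), where (a)_k is the Pochhammer symbol. -/
open Filter

/-- dual q-Krawtchouk polynomial `R_n(q^{-l} - t q^{-l}; t⁻¹, 2l; q)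
= ₃φ₂(q^{-n}, q^{-l}, -t q^{-l}; q^{-2l}, 0; q, q)`. -/
noncomputable def dualqKrawtchouk (q : ℝ) (n l : ℕ) (t : ℝ) : ℝ :=
  ∑ k ∈ Finset.range (n + 1),
    qPoch q (q ^ (-(n : ℤ))) k * qPoch q (q ^ (-(l : ℤ))) k * qPoch q (-(t * q ^ (-(l : ℤ)))) k
      / (qPoch q (q ^ (-(2 * l : ℤ))) k * qPoch q q k) * q ^ k

/-- Pochhammer symbol `(a)_k = a(a+1)⋯(a+k-1)`. -/
noncomputable def pochhammerR (a : ℝ) (k : ℕ) : ℝ := ∏ j ∈ Finset.range k, (a + j)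

/-!
As `q → 1` every ratio `(1 - q^a) / (1 - q^b)` tends to `a / b` and `(-u q^{-l}; q)_k` tends to
`(1 + u)^k`, so the `₃φ₂` degenerates termwise into the terminating `₂F₁(-n, -l; -2l; 1 + u)`,
where `n = l - m` and `u = d/c`. In binomial coefficients, this `₂F₁` and the Jacobi side are the
form `F(x, y) = ∑ₖ C(n,k) C(l+m+k, l) xᵏ yⁿ⁻ᵏ` at `(-1, 1 + u)` and at `(-u, 1 + u)`, up to the
sign `(-1)ⁿ` and the common factor `1 / C(2l, l)`. The identity `F(-x-y, y) = (-1)ⁿ F(x, y)` is the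
parity of `R_n^{(m,m)}`; comparing coefficients reduces it to the `N`-th forward difference of
`x ↦ C(x, N + r)`, which is `x ↦ C(x, r)`.
-/

open Finset Topology
open scoped Nat

lemma pochhammerR_natCast_add_one (N k : ℕ) : pochhammerR (N + 1) k = (N + k)! / N ! := by
  rw [eq_div_iff (by positivity), ← Nat.factorial_mul_ascFactorial, Nat.ascFactorial_eq_prod_range,
    pochhammerR]
  push_cast
  ring_nf

lemma pochhammerR_one (k : ℕ) : pochhammerR 1 k = k ! := by
  simpa using pochhammerR_natCast_add_one 0 k

lemma pochhammerR_neg_natCast {N k : ℕ} (hk : k ≤ N) :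
    pochhammerR (-N) k = (-1) ^ k * N ! / (N - k)! := by
  have h := prod_neg (s := range k) (fun j => (N : ℝ) - j)
  rw [card_range, ← descPochhammer_eval_eq_prod_range, descPochhammer_eval_eq_descFactorial] at h
  rw [eq_div_iff (by positivity), ← Nat.factorial_mul_descFactorial hk, pochhammerR]
  simp only [neg_sub] at h
  simp only [neg_add_eq_sub, h]
  push_cast
  ring

/-- The terminating series `₂F₁(a, b; c; z)` cut off after `z^n`; for `a = -n` nothing is lost. -/
noncomputable def hyp2F1 (n : ℕ) (a b c z : ℝ) : ℝ :=
  ∑ k ∈ range (n + 1), pochhammerR a k * pochhammerR b k / (pochhammerR c k * k !) * z ^ k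

lemma jacobiR_eq_hyp2F1 (n : ℕ) (α β y : ℝ) :
    jacobiR n α β y = hyp2F1 n (-n) (n + α + β + 1) (α + 1) ((1 - y) / 2) := rfl

lemma tendsto_one_sub_zpow_div_one_sub_zpow {a b : ℤ} (hb : b ≠ 0) :
    Tendsto (fun q : ℝ => (1 - q ^ a) / (1 - q ^ b)) (𝓝[≠] 1) (𝓝 (a / b)) := by
  have slope_tendsto (c : ℤ) : Tendsto (slope (fun q : ℝ => q ^ c) 1) (𝓝[≠] 1) (𝓝 c) := by
    simpa using (hasDerivAt_zpow c (1 : ℝ) (Or.inl one_ne_zero)).tendsto_slope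
  refine ((slope_tendsto a).div (slope_tendsto b) (by exact_mod_cast hb)).congr' ?_
  filter_upwards [self_mem_nhdsWithin] with q (hq : q ≠ 1)
  rw [Pi.div_apply, slope_def_field, slope_def_field,
    div_div_div_cancel_right₀ (sub_ne_zero.mpr hq), one_zpow, one_zpow, ← neg_div_neg_eq,
    neg_sub, neg_sub]

lemma qPoch_zpow {q : ℝ} (hq : q ≠ 0) (a : ℤ) (k : ℕ) :
    qPoch q (q ^ a) k = ∏ j ∈ range k, (1 - q ^ (a + j)) := by
  simp only [qPoch, zpow_add₀ hq, zpow_natCast]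

lemma tendsto_qPoch_div_qPoch {a b : ℤ} {k : ℕ} (hb : ∀ j < k, b + j ≠ 0) :
    Tendsto (fun q => qPoch q (q ^ a) k / qPoch q (q ^ b) k) (𝓝[≠] 1)
      (𝓝 (pochhammerR a k / pochhammerR b k)) := by
  rw [pochhammerR, pochhammerR, ← prod_div_distrib]
  refine (tendsto_finsetProd (f := fun (j : ℕ) (q : ℝ) => (1 - q ^ (a + j)) / (1 - q ^ (b + j)))
    (a := fun j : ℕ => ((a : ℝ) + j) / (b + j)) _ fun j hj => ?_).congr' ?_
  · convert tendsto_one_sub_zpow_div_one_sub_zpow (hb j (mem_range.mp hj)) using 2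
    push_cast
    rfl
  · filter_upwards [(eventually_ne_nhds one_ne_zero).filter_mono nhdsWithin_le_nhds] with q hq
    rw [qPoch_zpow hq, qPoch_zpow hq, prod_div_distrib]

lemma tendsto_qPoch_neg_mul_zpow (t : ℝ) (a : ℤ) (k : ℕ) :
    Tendsto (fun q => qPoch q (-(t * q ^ a)) k) (𝓝 1) (𝓝 ((1 + t) ^ k)) := by
  have hcont : ContinuousAt (fun q => qPoch q (-(t * q ^ a)) k) 1 := by
    unfold qPoch
    fun_prop (disch := norm_num)
  simpa [qPoch, sub_eq_add_neg, add_comm] using hcont.tendsto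

theorem tendsto_dualqKrawtchouk {n l : ℕ} (hn : n ≤ 2 * l) (t : ℝ) :
    Tendsto (fun q => dualqKrawtchouk q n l t) (𝓝[≠] 1)
      (𝓝 (hyp2F1 n (-n) (-l) (-(2 * l : ℕ)) (1 + t))) := by
  unfold dualqKrawtchouk hyp2F1
  refine tendsto_finsetSum _ fun k hk => ?_
  have hkn := mem_range_succ_iff.mp hk
  have hn2l := tendsto_qPoch_div_qPoch (a := -n) (b := -(2 * l)) (k := k) fun j hj => by omega
  have hl1 := tendsto_qPoch_div_qPoch (a := -l) (b := 1) (k := k) fun j _ => by omega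
  have ht := tendsto_nhdsWithin_of_tendsto_nhds (s := {1}ᶜ) (tendsto_qPoch_neg_mul_zpow t (-l) k)
  have hq := tendsto_nhdsWithin_of_tendsto_nhds (s := {1}ᶜ) ((continuous_pow k).tendsto (1 : ℝ))
  convert ((hn2l.mul hl1).mul ht).mul hq using 1
  · funext q
    rw [zpow_one]
    ring
  · push_cast
    rw [pochhammerR_one, one_pow]
    congr 1
    ring

lemma neg_one_pow_mul_neg_one_pow_sub {R : Type*} [Monoid R] [HasDistribNeg R] {N i : ℕ}
    (h : i ≤ N) :
    (-1 : R) ^ N * (-1) ^ (N - i) = (-1) ^ i := by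
  rw [← pow_add, show N + (N - i) = 2 * (N - i) + i by omega, pow_add, pow_mul]
  simp

lemma sum_neg_one_pow_mul_choose_mul_choose_add (N r A : ℕ) :
    ∑ i ∈ range (N + 1), (-1 : ℤ) ^ i * N.choose i * (A + i).choose (N + r) =
      (-1) ^ N * A.choose r := by
  have h := fwdDiff_iter_eq_sum_shift (1 : ℕ) (fun x => ((x.choose (N + r) : ℕ) : ℤ)) N A
  simp only [fwdDiff_iter_choose, smul_eq_mul, mul_one] at h
  rw [h, mul_sum]
  refine sum_congr rfl fun i hi => ?_
  rw [← mul_assoc, ← mul_assoc, neg_one_pow_mul_neg_one_pow_sub (mem_range_succ_iff.mp hi)]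

lemma sum_neg_one_pow_mul_choose_mul_choose_mul_choose {n m j : ℕ} (hj : j ≤ n) :
    ∑ k ∈ range (n + 1), (-1 : ℤ) ^ k * n.choose k * k.choose j * (n + 2 * m + k).choose (n + m) =
      (-1) ^ n * n.choose j * (n + 2 * m + j).choose (n + m) := by
  rw [← sum_range_add_sum_Ico _ (show j ≤ n + 1 by omega),
    sum_eq_zero fun k hk => by simp [Nat.choose_eq_zero_of_lt (mem_range.mp hk)], zero_add,
    sum_Ico_eq_sum_range, show n + 1 - j = (n - j) + 1 by omega]
  have hterm : ∀ i ∈ range (n - j + 1),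
      (-1 : ℤ) ^ (j + i) * n.choose (j + i) * (j + i).choose j *
          (n + 2 * m + (j + i)).choose (n + m) = (-1) ^ j * n.choose j *
          ((-1) ^ i * (n - j).choose i * (n + 2 * m + j + i).choose (n - j + (m + j))) := by
    intro i _
    rw [mul_assoc _ (n.choose (j + i) : ℤ), ← Nat.cast_mul, Nat.choose_mul (Nat.le_add_right j i),
      Nat.add_sub_cancel_left, show n - j + (m + j) = n + m by omega, ← add_assoc, pow_add]
    push_cast
    ring
  rw [sum_congr rfl hterm, ← mul_sum, sum_neg_one_pow_mul_choose_mul_choose_add,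
    ← Nat.choose_symm_of_eq_add (show n + 2 * m + j = m + j + (n + m) by omega)]
  rw [show (-1 : ℤ) ^ j * n.choose j * ((-1) ^ (n - j) * (n + 2 * m + j).choose (m + j))
      = (-1) ^ j * (-1) ^ (n - j) * n.choose j * (n + 2 * m + j).choose (m + j) by ring,
    ← pow_add, Nat.add_sub_cancel' hj]

lemma add_pow_mul_pow_sub {k n : ℕ} (hk : k ≤ n) (x y : ℝ) :
    (x + y) ^ k * y ^ (n - k) = ∑ j ∈ range (n + 1), (k.choose j : ℝ) * x ^ j * y ^ (n - j) := by
  rw [add_pow, sum_mul, ← sum_range_add_sum_Ico _ (show k + 1 ≤ n + 1 by omega),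
    sum_eq_zero (s := Ico _ _) fun j hj => by
      simp [Nat.choose_eq_zero_of_lt (mem_Ico.mp hj).1], add_zero]
  refine sum_congr rfl fun j hj => ?_
  rw [show n - j = (k - j) + (n - k) by have := mem_range.mp hj; omega, pow_add]
  ring

/-- `jacobiChooseForm n m (-w) 1 / (n + 2m).choose (n + m) = R_n^{(m,m)}(1 - 2w)`, so
`jacobiChooseForm_neg_sub` is the parity `R_n^{(m,m)}(-y) = (-1)^n R_n^{(m,m)}(y)`. -/
noncomputable def jacobiChooseForm (n m : ℕ) (x y : ℝ) : ℝ :=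
  ∑ k ∈ range (n + 1), (n.choose k * (n + 2 * m + k).choose (n + m) : ℝ) * x ^ k * y ^ (n - k)

lemma jacobiChooseForm_neg_sub (n m : ℕ) (x y : ℝ) :
    jacobiChooseForm n m (-x - y) y = (-1) ^ n * jacobiChooseForm n m x y := by
  have expand : ∀ k ∈ range (n + 1),
      (n.choose k * (n + 2 * m + k).choose (n + m) : ℝ) * (-x - y) ^ k * y ^ (n - k) =
        ∑ j ∈ range (n + 1), ((-1) ^ k * n.choose k * k.choose j * (n + 2 * m + k).choose (n + m))
          * (x ^ j * y ^ (n - j)) := by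
    intro k hk
    calc _ = (-1) ^ k * n.choose k * (n + 2 * m + k).choose (n + m) *
          ((x + y) ^ k * y ^ (n - k)) := by
          rw [show -x - y = -(x + y) by ring, neg_pow]; ring
      _ = _ := by
          rw [add_pow_mul_pow_sub (mem_range_succ_iff.mp hk), mul_sum]
          exact sum_congr rfl fun j _ => by ring
  rw [jacobiChooseForm, sum_congr rfl expand, sum_comm, jacobiChooseForm, mul_sum]
  refine sum_congr rfl fun j hj => ?_
  have coeff : ∑ k ∈ range (n + 1),
      ((-1) ^ k * n.choose k * k.choose j * (n + 2 * m + k).choose (n + m) : ℝ) =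
        (-1) ^ n * n.choose j * (n + 2 * m + j).choose (n + m) := by
    exact_mod_cast
      sum_neg_one_pow_mul_choose_mul_choose_mul_choose (mem_range_succ_iff.mp hj)
  rw [← sum_mul, coeff]
  ring

lemma pow_mul_hyp2F1_eq_jacobiChooseForm (n m : ℕ) (x : ℝ) {y : ℝ} (hy : y ≠ 0) :
    y ^ n * hyp2F1 n (-n) (n + 2 * m + 1) (m + 1) (x / y) =
      jacobiChooseForm n m (-x) y / (n + 2 * m).choose (n + m) := by
  rw [hyp2F1, jacobiChooseForm, mul_sum, sum_div]
  refine sum_congr rfl fun k hk => ?_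
  have hkn := mem_range_succ_iff.mp hk
  have hb := pochhammerR_natCast_add_one (n + 2 * m) k
  push_cast at hb
  rw [pochhammerR_neg_natCast hkn, hb, pochhammerR_natCast_add_one, Nat.cast_choose ℝ hkn,
    Nat.cast_choose ℝ (show n + m ≤ n + 2 * m + k by omega),
    Nat.cast_choose ℝ (show n + m ≤ n + 2 * m by omega),
    show n + 2 * m + k - (n + m) = m + k by omega, show n + 2 * m - (n + m) = m by omega,
    div_pow, neg_pow, ← pow_mul_pow_sub y hkn]
  field_simp
  ring

lemma hyp2F1_eq_jacobiChooseForm_neg_one (n m : ℕ) (y : ℝ) :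
    hyp2F1 n (-n) (-(n + m : ℕ)) (-(2 * (n + m) : ℕ)) y =
      (-1) ^ n * jacobiChooseForm n m (-1) y / (2 * (n + m)).choose (n + m) := by
  rw [jacobiChooseForm, ← sum_range_reflect, mul_sum, sum_div, hyp2F1]
  refine sum_congr rfl fun k hk => ?_
  have hkn := mem_range_succ_iff.mp hk
  rw [pochhammerR_neg_natCast hkn, pochhammerR_neg_natCast (show k ≤ n + m by omega),
    pochhammerR_neg_natCast (show k ≤ 2 * (n + m) by omega), show n + 1 - 1 - k = n - k by omega,
    Nat.choose_symm hkn, Nat.sub_sub_self hkn, show n + 2 * m + (n - k) = 2 * (n + m) - k by omega,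
    Nat.cast_choose ℝ hkn, Nat.cast_choose ℝ (show n + m ≤ 2 * (n + m) - k by omega),
    Nat.cast_choose ℝ (show n + m ≤ 2 * (n + m) by omega),
    show 2 * (n + m) - k - (n + m) = n + m - k by omega,
    show 2 * (n + m) - (n + m) = n + m by omega]
  field_simp
  rw [mul_assoc, neg_one_pow_mul_neg_one_pow_sub hkn, mul_comm]

lemma hyp2F1_dualKrawtchoukLimit_eq_jacobi (n m : ℕ) {u : ℝ} (hu : 1 + u ≠ 0) :
    hyp2F1 n (-n) (-(n + m : ℕ)) (-(2 * (n + m) : ℕ)) (1 + u) =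
      pochhammerR (m + 1) n / pochhammerR (n + 2 * m + 1) n * (1 + u) ^ n *
        hyp2F1 n (-n) (n + 2 * m + 1) (m + 1) (u / (1 + u)) := by
  have hsym := jacobiChooseForm_neg_sub n m (-1) (1 + u)
  rw [show -(-1) - (1 + u) = -u by ring] at hsym
  have hb := pochhammerR_natCast_add_one (n + 2 * m) n
  push_cast at hb
  rw [hyp2F1_eq_jacobiChooseForm_neg_one, ← hsym, mul_assoc,
    pow_mul_hyp2F1_eq_jacobiChooseForm n m u hu, hb, pochhammerR_natCast_add_one,
    Nat.cast_choose ℝ (show n + m ≤ 2 * (n + m) by omega),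
    Nat.cast_choose ℝ (show n + m ≤ n + 2 * m by omega),
    show 2 * (n + m) - (n + m) = n + m by omega, show n + 2 * m - (n + m) = m by omega,
    show n + 2 * m + n = 2 * (n + m) by omega, add_comm m n]
  field_simp

/-- As `q ↑ 1`, the dual q-Krawtchouk polynomial
`R_{l-m}(q^{-l}-(d/c)q^{-l}; c/d, 2l; q)` tends to
`((m+1)_{l-m}/(l+m+1)_{l-m}) (1+d/c)^{l-m} R_{l-m}^{(m,m)}((c-d)/(c+d))`. -/
theorem dualqKrawtchouk_tendsto_jacobi (c d : ℝ) (hc : 0 < c) (hd : 0 < d)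
    (l m : ℕ) (hm : m ≤ l) :
    Tendsto (fun q : ℝ => dualqKrawtchouk q (l - m) l (d / c))
      (nhdsWithin 1 (Set.Ioo 0 1))
      (nhds (pochhammerR (m + 1) (l - m) / pochhammerR (l + m + 1) (l - m)
        * (1 + d / c) ^ (l - m) * jacobiR (l - m) m m ((c - d) / (c + d)))) := by
  obtain ⟨n, rfl⟩ := Nat.exists_eq_add_of_le' hm
  have hy : (1 - (c - d) / (c + d)) / 2 = d / c / (1 + d / c) := by
    field_simp
    ring
  have hlim := (tendsto_dualqKrawtchouk (n := n) (l := n + m) (by omega) (d / c)).mono_left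
    (nhdsWithin_mono 1 fun q (hq : q ∈ Set.Ioo 0 1) => hq.2.ne)
  rw [Nat.add_sub_cancel]
  convert hlim using 2
  rw [hyp2F1_dualKrawtchoukLimit_eq_jacobi n m (by positivity), jacobiR_eq_hyp2F1, hy]
  push_cast
  ring_nf
end

section
/- Ratio asymptotics for the monic big q-Jacobi polynomials with a=b=0 under the scaling q = r^{1/n}: for fixed r ∈ (0,1), c,d>0, and x ∈ ℂ∖[-d,c], lim_{n→∞} P̂_{n+1}(x;0,0,c,d;r^{1/n})/P̂_n(x;0,0,c,d;r^{1/n}) = √(rcd(1-r)) · ρ((x - r(c-d))/(2√(rcd(1-r)))), where ρ(z) = z + √(z²-1) with the branch of the square root chosen so that |ρ(z)| > 1 for z ∉ [-1,1]. -/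
/-!
With `t_k = P̂_{k+1}(x) / P̂_k(x)` the recurrence becomes the continued fraction
`t_{k+1} = x - q^{k+1}(c - d) - q^k c d (1 - q^{k+1}) / t_k`. Freezing `q^{k+1} = θ` and
`q = 1` in one step gives the map `t ↦ x - θ(c - d) - θ(1 - θ) c d / t`, whose fixed point of
larger modulus `F(θ)` is separated from the other one because `x` keeps a distance `D > 0` from
`[-d, c]`, an interval that contains `θ(c - d) ± 2√(θ(1 - θ)cd)` by AM-GM. Near `F(θ)` the map
contracts by a factor `1 - D/(2M)`, uniformly in `θ ∈ [r, 1]`. For `q = r^{1/n}` the frozen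
parameter `q^k` moves in steps of at most `1 - q → 0` and `F` is uniformly continuous on `[r, 1]`,
so `t_k` tracks `F(q^k)` with an error that vanishes as `n → ∞`; at `k = n` this gives
`t_n → F(r)`. Finally `F(r) = √(rcd(1-r)) ρ(·)`, both being the root of larger modulus of
`T² - (x - r(c - d)) T + rcd(1 - r)`.
-/

open Filter

/-- monic big q-Jacobi polynomial with `a = b = 0`, via its three-term recurrence
`P̂_{n+1}(x) = (x - q^n(c-d)) P̂_n(x) - q^{n-1} c d (1-q^n) P̂_{n-1}(x)`,
`P̂_0 = 1`, `P̂_1(x) = x - (c-d)`. -/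
noncomputable def PhatC (q c d : ℂ) : ℕ → ℂ → ℂ
  | 0, _ => 1
  | 1, x => x - (c - d)
  | (n + 2), x =>
      (x - q ^ (n + 1) * (c - d)) * PhatC q c d (n + 1) x
        - q ^ n * c * d * (1 - q ^ (n + 1)) * PhatC q c d n x

open Topology Set

namespace Complex

theorem sqrt_sq (z : ℂ) : sqrt z ^ 2 = z := cpow_ofNat_inv_pow z 2

theorem norm_sub_le_norm_add_of_re_mul_add_im_mul_nonneg {p q : ℂ}
    (h : 0 ≤ p.re * q.re + p.im * q.im) : ‖p - q‖ ≤ ‖p + q‖ := by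
  rw [← sq_le_sq₀ (norm_nonneg _) (norm_nonneg _)]
  simp only [Complex.sq_norm, normSq_apply, sub_re, sub_im, add_re, add_im]
  nlinarith

theorem re_mul_add_im_mul_sqrt_nonneg {z w : ℂ} (h : z.im = w.im) :
    0 ≤ (sqrt z).re * (sqrt w).re + (sqrt z).im * (sqrt w).im := by
  have hre : 0 ≤ (sqrt z).re * (sqrt w).re := by
    simp only [sqrt, cpow_inv_two_re]; positivity
  have him : 0 ≤ (sqrt z).im * (sqrt w).im := by
    rcases le_or_gt 0 z.im with hz | hz
    · simp only [sqrt, cpow_inv_two_im_eq_sqrt hz, cpow_inv_two_im_eq_sqrt (h ▸ hz)]; positivity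
    · simp only [sqrt, cpow_inv_two_im_eq_neg_sqrt hz, cpow_inv_two_im_eq_neg_sqrt (h ▸ hz),
        neg_mul_neg]; positivity
  linarith

theorem continuous_sqrt_sub_ofReal (x : ℂ) : Continuous fun y : ℝ => sqrt (x - y) := by
  simp only [sqrt_eq_real_add_ite, sub_im, ofReal_im, sub_zero, sub_re, ofReal_re]
  fun_prop

end Complex

section bigRoot

variable (B : ℂ) (a : ℝ)

/-- The root of larger modulus of `T² - B T + a²`. Both square roots are taken of numbers with the
same imaginary part, so the formula is continuous as `B` moves parallel to the real axis. -/
noncomputable def bigRoot : ℂ :=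
  ((Complex.sqrt (B - 2 * a) + Complex.sqrt (B + 2 * a)) / 2) ^ 2

noncomputable def smallRoot : ℂ :=
  ((Complex.sqrt (B - 2 * a) - Complex.sqrt (B + 2 * a)) / 2) ^ 2

theorem bigRoot_add_smallRoot : bigRoot B a + smallRoot B a = B := by
  have h₁ := Complex.sqrt_sq (B - 2 * a)
  have h₂ := Complex.sqrt_sq (B + 2 * a)
  unfold bigRoot smallRoot
  linear_combination (h₁ + h₂) / 2

theorem bigRoot_mul_smallRoot : bigRoot B a * smallRoot B a = a ^ 2 := by
  have h₁ := Complex.sqrt_sq (B - 2 * a)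
  have h₂ := Complex.sqrt_sq (B + 2 * a)
  unfold bigRoot smallRoot
  linear_combination
    (Complex.sqrt (B - 2 * a) ^ 2 - Complex.sqrt (B + 2 * a) ^ 2 - 4 * a) / 16 * (h₁ - h₂)

theorem norm_smallRoot_le : ‖smallRoot B a‖ ≤ ‖bigRoot B a‖ := by
  unfold bigRoot smallRoot
  rw [norm_pow, norm_pow, norm_div, norm_div]
  gcongr
  exact Complex.norm_sub_le_norm_add_of_re_mul_add_im_mul_nonneg
    (Complex.re_mul_add_im_mul_sqrt_nonneg (by simp))

theorem bigRoot_sq_sub_mul_add_sq : bigRoot B a ^ 2 - B * bigRoot B a + a ^ 2 = 0 := by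
  linear_combination bigRoot B a * bigRoot_add_smallRoot B a - bigRoot_mul_smallRoot B a

theorem abs_le_norm_bigRoot : |a| ≤ ‖bigRoot B a‖ := by
  refine abs_le_of_sq_le_sq ?_ (norm_nonneg _)
  calc a ^ 2 = ‖bigRoot B a‖ * ‖smallRoot B a‖ := by
        rw [← norm_mul, bigRoot_mul_smallRoot, ← Complex.ofReal_pow, Complex.norm_real,
          Real.norm_of_nonneg (sq_nonneg a)]
    _ ≤ ‖bigRoot B a‖ ^ 2 := by
        rw [sq]; exact mul_le_mul_of_nonneg_left (norm_smallRoot_le B a) (norm_nonneg _)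

theorem norm_le_two_mul_norm_bigRoot : ‖B‖ ≤ 2 * ‖bigRoot B a‖ := by
  calc ‖B‖ = ‖bigRoot B a + smallRoot B a‖ := by rw [bigRoot_add_smallRoot]
    _ ≤ ‖bigRoot B a‖ + ‖smallRoot B a‖ := norm_add_le _ _
    _ ≤ 2 * ‖bigRoot B a‖ := by linarith [norm_smallRoot_le B a]

@[simp]
theorem bigRoot_zero : bigRoot B 0 = B := by
  simp [bigRoot, Complex.sqrt_sq]

end bigRoot

theorem sq_add_mul_norm_le_sq_of_root {B T : ℂ} {a δ : ℝ} (ha : 0 ≤ a) (haT : a ≤ ‖T‖)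
    (hroot : T ^ 2 - B * T + a ^ 2 = 0) (hB : ∀ t ∈ Icc (-1 : ℝ) 1, δ ≤ ‖B - 2 * a * t‖) :
    a ^ 2 + δ * ‖T‖ ≤ ‖T‖ ^ 2 := by
  rcases eq_or_ne T 0 with rfl | hT
  · have : a = 0 := le_antisymm (by simpa using haT) ha
    simp [this]
  set R := ‖T‖
  have hR0 : 0 < R := norm_pos_iff.2 hT
  set v : ℂ := T / R
  have hv : ‖v‖ = 1 := by
    simp only [v, norm_div, Complex.norm_real, Real.norm_of_nonneg hR0.le]
    exact div_self hR0.ne'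
  have hTv : T = R * v := by
    simp only [v]; field_simp [Complex.ofReal_ne_zero.2 hR0.ne']
  set t := v.re
  have ht : t ∈ Icc (-1) 1 := abs_le.1 (hv ▸ Complex.abs_re_le_norm v)
  have hvv : v * (starRingEnd ℂ) v = 1 := by
    rw [Complex.mul_conj, Complex.normSq_eq_norm_sq, hv]; simp
  have hvt : v + (starRingEnd ℂ) v = 2 * t := by
    rw [Complex.add_conj]; push_cast; rfl
  -- the point `2a Re v` of `[-2a, 2a]`, for the unit vector `v = T / ‖T‖`, gives
  -- `‖T‖ δ ≤ (‖T‖ - a)(‖T‖ + a)`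
  have hfactor : (T - a * v) * (T - a * (starRingEnd ℂ) v) = T * (B - 2 * a * t) := by
    linear_combination hroot + a ^ 2 * hvv - a * T * hvt
  have h₁ : ‖T - a * v‖ = R - a := by
    rw [hTv, ← sub_mul, ← Complex.ofReal_sub, norm_mul, hv, mul_one, Complex.norm_real,
      Real.norm_of_nonneg (sub_nonneg.2 haT)]
  have h₂ : ‖T - a * (starRingEnd ℂ) v‖ ≤ R + a := by
    refine (norm_sub_le _ _).trans_eq ?_
    rw [norm_mul, Complex.norm_conj, hv, mul_one, Complex.norm_real, Real.norm_of_nonneg ha]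
  have h₃ : R * ‖B - 2 * a * t‖ = (R - a) * ‖T - a * (starRingEnd ℂ) v‖ := by
    rw [← h₁, ← norm_mul, ← norm_mul, hfactor]
  have h₄ := mul_le_mul_of_nonneg_left h₂ (sub_nonneg.2 haT)
  have h₅ := mul_le_mul_of_nonneg_left (hB t ht) hR0.le
  nlinarith

theorem exists_inverse_joukowski_of_root {B L : ℂ} {a : ℝ} (ha : 0 < a)
    (hroot : L ^ 2 - B * L + a ^ 2 = 0) (hL : a < ‖L‖) :
    ∃ s : ℂ, s ^ 2 = (B / (2 * a)) ^ 2 - 1 ∧ 1 < ‖B / (2 * a) + s‖ ∧ a * (B / (2 * a) + s) = L := by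
  have ha' : (a : ℂ) ≠ 0 := Complex.ofReal_ne_zero.2 ha.ne'
  have hsum : B / (2 * a) + (2 * L - B) / (2 * a) = L / a := by field_simp; ring
  refine ⟨(2 * L - B) / (2 * a), ?_, ?_, ?_⟩
  · field_simp
    linear_combination 4 * hroot
  · rw [hsum, norm_div, Complex.norm_real, Real.norm_of_nonneg ha.le, one_lt_div ha]
    exact hL
  · rw [hsum]; field_simp

theorem norm_sub_div_sub_root_le {b G t A a : ℂ} {δ M : ℝ} (hδ : 0 < δ) (hGδ : δ ≤ ‖G‖)
    (hGM : ‖G‖ ≤ M) (hroot : G ^ 2 - b * G + A = 0) (hsep : ‖A‖ + δ * ‖G‖ ≤ ‖G‖ ^ 2)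
    (ht : ‖t - G‖ ≤ δ / 2) :
    ‖b - a / t - G‖ ≤ (1 - δ / (2 * M)) * ‖t - G‖ + 2 * ‖a - A‖ / δ := by
  have hG : 0 < ‖G‖ := hδ.trans_le hGδ
  have hts : ‖G‖ - δ / 2 ≤ ‖t‖ := by linarith [norm_sub_norm_le G t, norm_sub_rev G t]
  have ht0 : 0 < ‖t‖ := by linarith
  have hsplit : b - a / t - G = A * (t - G) / (G * t) + (A - a) / t := by
    field_simp [norm_pos_iff.1 hG, norm_pos_iff.1 ht0]
    linear_combination (-t) * hroot
  -- the contraction factor `‖A‖ / (‖G‖ ‖t‖)` is at most `1 - δ / (2M)` because `‖A‖ ≤ ‖G‖ (‖G‖ - δ)`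
  have hfactor : ‖A‖ ≤ (1 - δ / (2 * M)) * (‖G‖ * ‖t‖) := by
    have hκ : δ / (2 * M) * ‖G‖ ≤ δ / 2 := by
      rw [div_mul_eq_mul_div, div_le_div_iff₀ (by linarith) two_pos]
      nlinarith
    have hκ₁ : 0 ≤ 1 - δ / (2 * M) := by
      have : δ / (2 * M) * δ ≤ δ / (2 * M) * ‖G‖ :=
        mul_le_mul_of_nonneg_left hGδ (by have := hG.trans_le hGM; positivity)
      nlinarith
    calc ‖A‖ ≤ ‖G‖ * (‖G‖ - δ) := by linarith
      _ ≤ (1 - δ / (2 * M)) * (‖G‖ * (‖G‖ - δ / 2)) := by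
          nlinarith [mul_le_mul_of_nonneg_right hκ (by linarith : 0 ≤ ‖G‖ - δ / 2)]
      _ ≤ (1 - δ / (2 * M)) * (‖G‖ * ‖t‖) := by gcongr
  calc ‖b - a / t - G‖ ≤ ‖A‖ * ‖t - G‖ / (‖G‖ * ‖t‖) + ‖a - A‖ / ‖t‖ := by
        rw [hsplit, norm_sub_rev a A]
        refine (norm_add_le _ _).trans_eq ?_
        rw [norm_div, norm_div, norm_mul, norm_mul]
    _ ≤ (1 - δ / (2 * M)) * ‖t - G‖ + 2 * ‖a - A‖ / δ := by
        gcongr ?_ + ?_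
        · rw [div_le_iff₀ (by positivity)]
          nlinarith [norm_nonneg (t - G)]
        · rw [div_le_div_iff₀ ht0 hδ]; nlinarith [norm_nonneg (a - A)]

theorem dist_le_of_forall_dist_succ_le {X : Type*} [PseudoMetricSpace X] {t G : ℕ → X} {n : ℕ}
    {κ η ζ ρ : ℝ} (hκ₀ : 0 ≤ κ) (hκ₁ : κ < 1) (hη : 0 ≤ η) (hζ : 0 ≤ ζ)
    (hρ : (η + ζ) / (1 - κ) ≤ ρ) (h₀ : t 0 = G 0)
    (hG : ∀ k < n, dist (G (k + 1)) (G k) ≤ η)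
    (ht : ∀ k < n, dist (t k) (G (k + 1)) ≤ ρ →
      dist (t (k + 1)) (G (k + 1)) ≤ κ * dist (t k) (G (k + 1)) + ζ) :
    ∀ k ≤ n, dist (t k) (G k) ≤ (κ * η + ζ) / (1 - κ) := by
  have h1κ : 0 < 1 - κ := sub_pos.2 hκ₁
  intro k
  induction k with
  | zero => intro; rw [h₀, dist_self]; positivity
  | succ k ih =>
    intro hk
    -- `(κ η + ζ) / (1 - κ)` is the fixed point of `e ↦ κ (e + η) + ζ`
    have hnext : dist (t k) (G (k + 1)) ≤ (η + ζ) / (1 - κ) :=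
      calc dist (t k) (G (k + 1)) ≤ dist (t k) (G k) + dist (G (k + 1)) (G k) :=
            (dist_triangle _ _ _).trans_eq (by rw [dist_comm (G k)])
        _ ≤ (κ * η + ζ) / (1 - κ) + η := add_le_add (ih (by omega)) (hG k hk)
        _ = (η + ζ) / (1 - κ) := by field_simp; ring
    calc dist (t (k + 1)) (G (k + 1)) ≤ κ * dist (t k) (G (k + 1)) + ζ := ht k hk (hnext.trans hρ)
      _ ≤ κ * ((η + ζ) / (1 - κ)) + ζ := by gcongr
      _ = (κ * η + ζ) / (1 - κ) := by field_simp; ring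

noncomputable def ratioSeq (b a : ℕ → ℂ) : ℕ → ℂ
  | 0 => b 0
  | k + 1 => b (k + 1) - a k / ratioSeq b a k

theorem succ_eq_ratioSeq_mul {P b a : ℕ → ℂ} (h₀ : P 0 = 1) (h₁ : P 1 = b 0)
    (hrec : ∀ k, P (k + 2) = b (k + 1) * P (k + 1) - a k * P k) :
    ∀ k, (∀ j < k, ratioSeq b a j ≠ 0) → P (k + 1) = ratioSeq b a k * P k ∧ P k ≠ 0 := by
  intro k
  induction k with
  | zero => intro; simp [h₀, h₁, ratioSeq]
  | succ k ih =>
    intro hne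
    obtain ⟨hk, hPk⟩ := ih fun j hj => hne j (by omega)
    have htk := hne k (by omega)
    refine ⟨?_, by rw [hk]; exact mul_ne_zero htk hPk⟩
    rw [hrec, hk, ratioSeq]
    field_simp

theorem div_eq_ratioSeq {P b a : ℕ → ℂ} (h₀ : P 0 = 1) (h₁ : P 1 = b 0)
    (hrec : ∀ k, P (k + 2) = b (k + 1) * P (k + 1) - a k * P k) {n : ℕ}
    (hne : ∀ j < n, ratioSeq b a j ≠ 0) : P (n + 1) / P n = ratioSeq b a n := by
  obtain ⟨h, hP⟩ := succ_eq_ratioSeq_mul h₀ h₁ hrec n hne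
  rw [h, mul_div_cancel_right₀ _ hP]

theorem exists_pos_le_norm_sub_ofReal {x : ℂ} {K : Set ℝ} (hK : IsCompact K)
    (hx : ∀ y ∈ K, x ≠ y) : ∃ D > 0, ∀ y ∈ K, D ≤ ‖x - y‖ := by
  rcases K.eq_empty_or_nonempty with rfl | hne
  · exact ⟨1, one_pos, by simp⟩
  obtain ⟨y₀, hy₀, hmin⟩ := hK.exists_isMinOn hne (f := fun y : ℝ => ‖x - y‖) (by fun_prop)
  exact ⟨‖x - y₀‖, norm_pos_iff.2 (sub_ne_zero.2 (hx y₀ hy₀)), fun y hy => hmin hy⟩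

theorem two_mul_sqrt_mul_le_add {u v : ℝ} (hu : 0 ≤ u) (hv : 0 ≤ v) : 2 * √(u * v) ≤ u + v := by
  nlinarith [Real.sq_sqrt (mul_nonneg hu hv), Real.sqrt_nonneg (u * v), sq_nonneg (u - v)]

theorem add_two_mul_sqrt_mul_mem_Icc {c d θ t : ℝ} (hc : 0 ≤ c) (hd : 0 ≤ d) (hθ : θ ∈ Icc 0 1)
    (ht : t ∈ Icc (-1) 1) : θ * (c - d) + 2 * √(θ * c * d * (1 - θ)) * t ∈ Icc (-d) c := by
  obtain ⟨hθ₀, hθ₁⟩ := hθ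
  have h₁ : 2 * √(θ * c * d * (1 - θ)) ≤ θ * c + (1 - θ) * d := by
    rw [show θ * c * d * (1 - θ) = (θ * c) * ((1 - θ) * d) by ring]
    exact two_mul_sqrt_mul_le_add (by positivity) (mul_nonneg (by linarith) hd)
  have h₂ : 2 * √(θ * c * d * (1 - θ)) ≤ θ * d + (1 - θ) * c := by
    rw [show θ * c * d * (1 - θ) = (θ * d) * ((1 - θ) * c) by ring]
    exact two_mul_sqrt_mul_le_add (by positivity) (mul_nonneg (by linarith) hc)
  have h₃ := abs_le.2 ht
  have h₄ : |2 * √(θ * c * d * (1 - θ)) * t| ≤ 2 * √(θ * c * d * (1 - θ)) := by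
    rw [abs_mul, abs_of_nonneg (by positivity)]
    exact mul_le_of_le_one_right (by positivity) h₃
  constructor <;> linarith [abs_le.1 h₄]

section frozenRatio

variable (x : ℂ) (c d : ℝ)

/-- The limit of `P̂_{k+1}/P̂_k` if the recurrence coefficients were frozen at `q^k = θ`, `q = 1`. -/
noncomputable def frozenRatio (θ : ℝ) : ℂ :=
  bigRoot (x - θ * (c - d)) √(θ * c * d * (1 - θ))

theorem continuous_frozenRatio : Continuous (frozenRatio x c d) := by
  have h : ∀ θ : ℝ, frozenRatio x c d θ =
      ((Complex.sqrt (x - ((θ * (c - d) + 2 * √(θ * c * d * (1 - θ)) : ℝ) : ℂ)) +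
        Complex.sqrt (x - ((θ * (c - d) - 2 * √(θ * c * d * (1 - θ)) : ℝ) : ℂ))) / 2) ^ 2 := by
    intro θ
    simp only [frozenRatio, bigRoot]
    push_cast
    ring_nf
  rw [funext h]
  exact (((Complex.continuous_sqrt_sub_ofReal x).comp (by fun_prop)).add
    ((Complex.continuous_sqrt_sub_ofReal x).comp (by fun_prop))).div_const 2 |>.pow 2

@[simp]
theorem frozenRatio_one : frozenRatio x c d 1 = x - (c - d) := by
  simp [frozenRatio]

variable {x c d} {θ D : ℝ} (hc : 0 ≤ c) (hd : 0 ≤ d) (hθ : θ ∈ Icc 0 1)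
include hc hd hθ

theorem frozenCoeff_nonneg : 0 ≤ θ * c * d * (1 - θ) := by
  have := sub_nonneg.2 hθ.2
  have := hθ.1
  positivity

theorem frozenRatio_sq_sub_mul_add :
    frozenRatio x c d θ ^ 2 - (x - θ * (c - d)) * frozenRatio x c d θ
      + ((θ * c * d * (1 - θ) : ℝ) : ℂ) = 0 := by
  have h := bigRoot_sq_sub_mul_add_sq (x - θ * (c - d)) √(θ * c * d * (1 - θ))
  rwa [← Complex.ofReal_pow, Real.sq_sqrt (frozenCoeff_nonneg hc hd hθ)] at h

variable (hD : ∀ y ∈ Icc (-d) c, D ≤ ‖x - y‖)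
include hD

theorem sq_add_mul_norm_frozenRatio_le :
    θ * c * d * (1 - θ) + D * ‖frozenRatio x c d θ‖ ≤ ‖frozenRatio x c d θ‖ ^ 2 := by
  have h := sq_add_mul_norm_le_sq_of_root (Real.sqrt_nonneg _)
    ((le_abs_self _).trans (abs_le_norm_bigRoot _ _))
    (bigRoot_sq_sub_mul_add_sq (x - θ * (c - d)) √(θ * c * d * (1 - θ)))
    (fun t ht => by
      have := hD _ (add_two_mul_sqrt_mul_mem_Icc hc hd hθ ht)
      convert this using 2; push_cast; ring)
  rwa [Real.sq_sqrt (frozenCoeff_nonneg hc hd hθ)] at h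

theorem le_norm_frozenRatio (hD₀ : 0 < D) : D ≤ ‖frozenRatio x c d θ‖ := by
  have h := sq_add_mul_norm_frozenRatio_le hc hd hθ hD
  have hpos : 0 < ‖frozenRatio x c d θ‖ := by
    have h₁ := norm_le_two_mul_norm_bigRoot (x - θ * (c - d)) √(θ * c * d * (1 - θ))
    have h₂ := hD _ (add_two_mul_sqrt_mul_mem_Icc hc hd hθ (t := 0) (by norm_num))
    simp only [mul_zero, add_zero] at h₂
    push_cast at h₂
    simp only [frozenRatio]
    linarith
  nlinarith [frozenCoeff_nonneg hc hd hθ]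

end frozenRatio

noncomputable def PhatRatio (q c d x : ℂ) : ℕ → ℂ :=
  ratioSeq (fun k => x - q ^ k * (c - d)) (fun k => q ^ k * c * d * (1 - q ^ (k + 1)))

theorem PhatC_div_eq_PhatRatio {q c d x : ℂ} {n : ℕ} (hne : ∀ j < n, PhatRatio q c d x j ≠ 0) :
    PhatC q c d (n + 1) x / PhatC q c d n x = PhatRatio q c d x n :=
  div_eq_ratioSeq (P := fun k => PhatC q c d k x) (by simp [PhatC]) (by simp [PhatC])
    (fun _ => rfl) hne

section PhatRatio

variable {x : ℂ} {c d D q : ℝ} (hc : 0 ≤ c) (hd : 0 ≤ d) (hD₀ : 0 < D)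
  (hD : ∀ y ∈ Icc (-d) c, D ≤ ‖x - y‖) (hq₀ : 0 < q) (hq₁ : q ≤ 1)
include hc hd hD₀ hD hq₀ hq₁

theorem norm_PhatRatio_succ_sub_le {M : ℝ} {k : ℕ} (hM : ‖frozenRatio x c d (q ^ (k + 1))‖ ≤ M)
    (ht : ‖PhatRatio q c d x k - frozenRatio x c d (q ^ (k + 1))‖ ≤ D / 2) :
    ‖PhatRatio q c d x (k + 1) - frozenRatio x c d (q ^ (k + 1))‖ ≤
      (1 - D / (2 * M)) * ‖PhatRatio q c d x k - frozenRatio x c d (q ^ (k + 1))‖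
        + 2 * ((1 - q) * c * d) / D := by
  have hθ : q ^ (k + 1) ∈ Icc 0 1 := ⟨by positivity, pow_le_one₀ hq₀.le hq₁⟩
  have h := norm_sub_div_sub_root_le hD₀ (le_norm_frozenRatio hc hd hθ hD hD₀) hM
    (frozenRatio_sq_sub_mul_add hc hd hθ) (by
      rw [Complex.norm_real, Real.norm_of_nonneg (frozenCoeff_nonneg hc hd hθ)]
      exact sq_add_mul_norm_frozenRatio_le hc hd hθ hD) ht
    (a := (q : ℂ) ^ k * c * d * (1 - (q : ℂ) ^ (k + 1)))
  -- the true coefficient `q^k c d (1 - q^(k+1))` differs from the frozen one by a factor `1/q`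
  have hcoeff : ‖(q : ℂ) ^ k * c * d * (1 - (q : ℂ) ^ (k + 1))
      - ((q ^ (k + 1) * c * d * (1 - q ^ (k + 1)) : ℝ) : ℂ)‖ ≤ (1 - q) * c * d := by
    have hqk : q ^ k ≤ 1 := pow_le_one₀ hq₀.le hq₁
    rw [show (q : ℂ) ^ k * c * d * (1 - (q : ℂ) ^ (k + 1))
        - ((q ^ (k + 1) * c * d * (1 - q ^ (k + 1)) : ℝ) : ℂ)
        = ((q ^ k * (1 - q ^ (k + 1)) * ((1 - q) * c * d) : ℝ) : ℂ) by push_cast; ring,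
      Complex.norm_real]
    have h₁ : 0 ≤ 1 - q ^ (k + 1) := sub_nonneg.2 hθ.2
    refine (Real.norm_of_nonneg (by have := sub_nonneg.2 hq₁; positivity)).trans_le ?_
    exact mul_le_of_le_one_left (by have := sub_nonneg.2 hq₁; positivity)
      (mul_le_one₀ hqk h₁ (sub_le_self _ hθ.1))
  have hrec : PhatRatio q c d x (k + 1) = x - ((q ^ (k + 1) : ℝ) : ℂ) * (c - d)
      - (q : ℂ) ^ k * c * d * (1 - (q : ℂ) ^ (k + 1)) / PhatRatio q c d x k := by
    push_cast; rfl
  rw [hrec]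
  refine h.trans ?_
  gcongr

theorem norm_PhatC_div_sub_frozenRatio_le {M r η : ℝ} {n : ℕ} (hqn : r ≤ q ^ n)
    (hM : ∀ θ ∈ Icc r 1, ‖frozenRatio x c d θ‖ ≤ M) (hη : 0 ≤ η)
    (hjump : ∀ k < n, ‖frozenRatio x c d (q ^ (k + 1)) - frozenRatio x c d (q ^ k)‖ ≤ η)
    (hsmall : (η + 2 * ((1 - q) * c * d) / D) / (D / (2 * M)) ≤ D / 2) :
    ‖PhatC q c d (n + 1) x / PhatC q c d n x - frozenRatio x c d (q ^ n)‖ ≤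
      (η + 2 * ((1 - q) * c * d) / D) / (D / (2 * M)) := by
  have hθ : ∀ k ≤ n, q ^ k ∈ Icc r 1 := fun k hk =>
    ⟨hqn.trans (pow_le_pow_of_le_one hq₀.le hq₁ hk), pow_le_one₀ hq₀.le hq₁⟩
  have hθ₀ : ∀ k, q ^ k ∈ Icc (0 : ℝ) 1 := fun k => ⟨by positivity, pow_le_one₀ hq₀.le hq₁⟩
  have hDM : D ≤ M := (le_norm_frozenRatio hc hd (hθ₀ n) hD hD₀).trans (hM _ (hθ n le_rfl))
  have hDM₀ : 0 < D / (2 * M) := by have := hD₀.trans_le hDM; positivity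
  have hκ : 1 - (1 - D / (2 * M)) = D / (2 * M) := by ring
  have hκ₀ : 0 ≤ 1 - D / (2 * M) := by
    rw [sub_nonneg, div_le_one (by linarith)]; linarith
  have htrack := dist_le_of_forall_dist_succ_le (t := PhatRatio q c d x)
    (G := fun k => frozenRatio x c d (q ^ k)) (ζ := 2 * ((1 - q) * c * d) / D) (ρ := D / 2)
    hκ₀ (by linarith) hη (by have := sub_nonneg.2 hq₁; positivity) (by rwa [hκ])
    (by simp [PhatRatio, ratioSeq]) (fun k hk => by rw [dist_eq_norm]; exact hjump k hk)
    (fun k hk h => by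
      simp only [dist_eq_norm] at h ⊢
      exact norm_PhatRatio_succ_sub_le hc hd hD₀ hD hq₀ hq₁ (hM _ (hθ _ hk)) h)
  rw [hκ] at htrack
  have hclose : ∀ k ≤ n, ‖PhatRatio q c d x k - frozenRatio x c d (q ^ k)‖ ≤
      (η + 2 * ((1 - q) * c * d) / D) / (D / (2 * M)) := fun k hk => by
    rw [← dist_eq_norm]
    refine (htrack k hk).trans ?_
    gcongr
    exact mul_le_of_le_one_left hη (by linarith)
  have hne : ∀ j < n, PhatRatio q c d x j ≠ 0 := fun j hj h => by
    have h₁ := hclose j hj.le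
    rw [h, zero_sub, norm_neg] at h₁
    linarith [le_norm_frozenRatio hc hd (hθ₀ j) hD hD₀]
  rw [PhatC_div_eq_PhatRatio hne]
  exact hclose n le_rfl

end PhatRatio

theorem dist_pow_succ_pow_le {q : ℝ} (hq₀ : 0 ≤ q) (hq₁ : q ≤ 1) (k : ℕ) :
    dist (q ^ (k + 1)) (q ^ k) ≤ 1 - q := by
  have h₀ : 0 ≤ q ^ k := pow_nonneg hq₀ k
  have h₁ : q ^ k ≤ 1 := pow_le_one₀ hq₀ hq₁
  rw [Real.dist_eq, abs_sub_comm, abs_of_nonneg (by rw [pow_succ]; nlinarith), pow_succ]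
  nlinarith

theorem tendsto_rpow_one_div_natCast {r : ℝ} (hr : 0 < r) :
    Tendsto (fun n : ℕ => r ^ (1 / (n : ℝ))) atTop (𝓝 1) := by
  simpa [Function.comp_def] using (Real.continuousAt_const_rpow hr.ne' (b := 0)).tendsto.comp
    tendsto_one_div_atTop_nhds_zero_nat

theorem tendsto_PhatC_div_frozenRatio {x : ℂ} {r c d D : ℝ} (hr₀ : 0 < r) (hr₁ : r ≤ 1)
    (hc : 0 ≤ c) (hd : 0 ≤ d) (hD₀ : 0 < D) (hD : ∀ y ∈ Icc (-d) c, D ≤ ‖x - y‖) :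
    Tendsto (fun n : ℕ => PhatC ((r ^ (1 / (n : ℝ)) : ℝ) : ℂ) c d (n + 1) x
      / PhatC ((r ^ (1 / (n : ℝ)) : ℝ) : ℂ) c d n x) atTop (𝓝 (frozenRatio x c d r)) := by
  obtain ⟨M, hM⟩ := isCompact_Icc.exists_bound_of_continuousOn (s := Icc r 1)
    (continuous_frozenRatio x c d).continuousOn
  have hM₀ : 0 < M := hD₀.trans_le ((le_norm_frozenRatio hc hd ⟨hr₀.le, hr₁⟩ hD hD₀).trans
    (hM r ⟨le_rfl, hr₁⟩))
  have hgap : Tendsto (fun n : ℕ => 1 - r ^ (1 / (n : ℝ))) atTop (𝓝 0) := by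
    simpa using (tendsto_rpow_one_div_natCast hr₀).const_sub 1
  have hζ : Tendsto (fun n : ℕ => 2 * ((1 - r ^ (1 / (n : ℝ))) * c * d) / D) atTop (𝓝 0) := by
    simpa using (((hgap.mul_const c).mul_const d).const_mul 2).div_const D
  rw [Metric.tendsto_atTop]
  intro ε hε
  set τ := min ε (D / 2) * (D / (2 * M)) / 2 with hτ
  have hτ₀ : 0 < τ := by positivity
  obtain ⟨δ, hδ, hFδ⟩ := Metric.uniformContinuousOn_iff.1
    (isCompact_Icc.uniformContinuousOn_of_continuous (continuous_frozenRatio x c d).continuousOn)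
    τ hτ₀
  obtain ⟨N, hN⟩ := eventually_atTop.1 ((eventually_ge_atTop 1).and
    ((hgap.eventually (gt_mem_nhds hδ)).and (hζ.eventually (gt_mem_nhds hτ₀))))
  refine ⟨N, fun n hn => ?_⟩
  obtain ⟨hn₁, hqδ, hζτ⟩ := hN n hn
  set q := r ^ (1 / (n : ℝ)) with hq
  have hq₀ : 0 < q := Real.rpow_pos_of_pos hr₀ _
  have hq₁ : q ≤ 1 := Real.rpow_le_one hr₀.le hr₁ (by positivity)
  have hqn : q ^ n = r := by
    rw [hq, one_div, Real.rpow_inv_natCast_pow hr₀.le (by omega)]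
  have hjump : ∀ k < n,
      ‖frozenRatio x c d (q ^ (k + 1)) - frozenRatio x c d (q ^ k)‖ ≤ τ := by
    have hθ : ∀ j ≤ n, q ^ j ∈ Icc r 1 := fun j hj =>
      ⟨hqn ▸ pow_le_pow_of_le_one hq₀.le hq₁ hj, pow_le_one₀ hq₀.le hq₁⟩
    intro k hk
    rw [← dist_eq_norm]
    exact (hFδ _ (hθ _ hk) _ (hθ _ hk.le)
      ((dist_pow_succ_pow_le hq₀.le hq₁ k).trans_lt hqδ)).le
  have hbound : (τ + 2 * ((1 - q) * c * d) / D) / (D / (2 * M)) < min ε (D / 2) := by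
    rw [div_lt_iff₀ (by positivity)]
    linarith
  have h := norm_PhatC_div_sub_frozenRatio_le hc hd hD₀ hD hq₀ hq₁ hqn.ge hM hτ₀.le hjump
    (hbound.le.trans (min_le_right _ _))
  rw [hqn] at h
  rw [dist_eq_norm]
  exact h.trans_lt (hbound.trans_le (min_le_left _ _))

/-- Ratio asymptotics for the monic big q-Jacobi polynomials with `a = b = 0` under
the scaling `q = r^{1/n}`: the ratio `P̂_{n+1}/P̂_n` tends to
`√(rcd(1-r)) ρ((x - r(c-d))/(2√(rcd(1-r))))`, where `ρ(z) = z + √(z²-1)` with the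
branch of the square root chosen so that `|ρ(z)| > 1` for `z ∉ [-1,1]`. -/
theorem bigqJacobi_ratio_asymptotics (r c d : ℝ) (hr0 : 0 < r) (hr1 : r < 1)
    (hc : 0 < c) (hd : 0 < d) (x : ℂ)
    (hx : x ∉ {z : ℂ | z.im = 0 ∧ -d ≤ z.re ∧ z.re ≤ c}) :
    ∃ s : ℂ,
      s ^ 2 = ((x - (r : ℂ) * ((c : ℂ) - d)) / (2 * (Real.sqrt (r * c * d * (1 - r)) : ℂ))) ^ 2 - 1 ∧
      1 < ‖
          ((x - (r : ℂ) * ((c : ℂ) - d)) / (2 * (Real.sqrt (r * c * d * (1 - r)) : ℂ)) + s)‖ ∧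
      Tendsto
        (fun n : ℕ =>
          PhatC ((r ^ (1 / (n : ℝ)) : ℝ) : ℂ) c d (n + 1) x
            / PhatC ((r ^ (1 / (n : ℝ)) : ℝ) : ℂ) c d n x)
        atTop
        (nhds ((Real.sqrt (r * c * d * (1 - r)) : ℂ)
          * ((x - (r : ℂ) * ((c : ℂ) - d)) / (2 * (Real.sqrt (r * c * d * (1 - r)) : ℂ)) + s))) := by
  obtain ⟨D, hD₀, hD⟩ := exists_pos_le_norm_sub_ofReal (x := x) (K := Icc (-d) c) isCompact_Icc
    fun y hy h => by subst h; exact hx ⟨by simp, by simpa using hy.1, by simpa using hy.2⟩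
  have hr : r ∈ Icc (0 : ℝ) 1 := ⟨hr0.le, hr1.le⟩
  have ha : 0 < √(r * c * d * (1 - r)) := Real.sqrt_pos.2 (by have := sub_pos.2 hr1; positivity)
  have hL : √(r * c * d * (1 - r)) < ‖frozenRatio x c d r‖ := by
    have h₁ := sq_add_mul_norm_frozenRatio_le hc.le hd.le hr hD
    have h₂ := le_norm_frozenRatio hc.le hd.le hr hD hD₀
    rw [← Real.sq_sqrt (frozenCoeff_nonneg hc.le hd.le hr)] at h₁
    exact lt_of_pow_lt_pow_left₀ 2 (norm_nonneg _) (by nlinarith)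
  obtain ⟨s, hs, hs₁, hsL⟩ := exists_inverse_joukowski_of_root ha
    (bigRoot_sq_sub_mul_add_sq _ _) hL
  exact ⟨s, hs, hs₁, hsL ▸ tendsto_PhatC_div_frozenRatio hr0 hr1.le hc.le hd.le hD₀ hD⟩
end
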